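/- arXiv:2008.03959 — 4 statements merged into one kernel-verified Lean document; each statement's English description precedes it below -/
import Mathlib

section
/- Under the ε-TS algorithm, assume μ_1 > 1−ε, fix b ∈ (0,1), and let L_1 = L_1(μ_1, ε, b) be a natural number such that for all t ≥ L_1 it holds that (t−1)^b ≥ 2 ln t / d(1−ε, μ_1) + 1. Then for every horizon T: Σ_{t=1}^T P(θ_1(t) ≤ 1−ε and N_1(t) > (t−1)^b) ≤ L_1 + (π²/6) / d(1−ε, μ_1). -/
open MeasureTheory ProbabilityTheory Filter Real
open scoped ENNReal

noncomputable section

/-- KL divergence between Bernoulli distributions of means `p` and `q` (real-valued version). -/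
def klBern (p q : ℝ) : ℝ :=
  p * Real.log (p / q) + (1 - p) * Real.log ((1 - p) / (1 - q))

/-- KL divergence between Bernoulli distributions of means `p` and `q`, with the conventions
`d(p,q) = ∞` if `p < 1` and `q ≥ 1`, or if `p > 0` and `q = 0`. -/
def klBernE (p q : ℝ) : ℝ≥0∞ :=
  if (p < 1 ∧ 1 ≤ q) ∨ (0 < p ∧ q = 0) then ⊤ else ENNReal.ofReal (klBern p q)

/-- The Bernoulli law with mean `p`, as a measure on `ℝ`. -/
def bernoulliLaw (p : ℝ) : Measure ℝ :=
  ENNReal.ofReal p • Measure.dirac (1 : ℝ) + ENNReal.ofReal (1 - p) • Measure.dirac (0 : ℝ)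

/-- The uniform law on `[0,1]`, as a measure on `ℝ`. -/
def uniform01 : Measure ℝ := volume.restrict (Set.Icc (0 : ℝ) 1)

/-- The cumulative distribution function of the `Beta(a, b)` distribution (for positive integer
parameters), evaluated at `x`. -/
def betaCDF (a b : ℕ) (x : ℝ) : ℝ :=
  (∫ y in (0 : ℝ)..x, y ^ (a - 1) * (1 - y) ^ (b - 1)) /
    (∫ y in (0 : ℝ)..1, y ^ (a - 1) * (1 - y) ^ (b - 1))

/-- The generalized inverse cdf of the `Beta(a, b)` distribution: applied to a uniform random
variable on `[0,1]`, it produces a `Beta(a, b)`-distributed random variable. -/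
def betaInvCDF (a b : ℕ) (u : ℝ) : ℝ :=
  sInf {x : ℝ | x ∈ Set.Icc (0 : ℝ) 1 ∧ u ≤ betaCDF a b x}

variable {K : ℕ} {Ω : Type*}

/-- `pulls arm a t ω` is the number of rounds `τ ∈ {1, …, t-1}` in which arm `a` was played,
i.e. `N_a(t)`, the number of pulls of arm `a` before round `t`. -/
def pulls (arm : ℕ → Ω → Fin K) (a : Fin K) (t : ℕ) (ω : Ω) : ℕ :=
  ∑ τ ∈ Finset.Ico 1 t, if arm τ ω = a then 1 else 0

/-- `rewSum arm X a t ω` is `S_a(t)`, the sum of the rewards observed from arm `a` before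
round `t`, where `X a k` is the reward obtained on the `k`-th pull of arm `a`. -/
def rewSum (arm : ℕ → Ω → Fin K) (X : Fin K → ℕ → Ω → ℝ) (a : Fin K) (t : ℕ) (ω : Ω) : ℝ :=
  ∑ k ∈ Finset.Icc 1 (pulls arm a t ω), X a k ω

/-- `empMean arm X a t ω` is `μ̂_a(t) = S_a(t) / N_a(t)` (and `0` if `N_a(t) = 0`). -/
def empMean (arm : ℕ → Ω → Fin K) (X : Fin K → ℕ → Ω → ℝ) (a : Fin K) (t : ℕ) (ω : Ω) : ℝ :=
  if pulls arm a t ω = 0 then 0 else rewSum arm X a t ω / (pulls arm a t ω : ℝ)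

/-- The first Beta-posterior parameter of `ε`-TS: `α_a(t) = ⌊S_a(t)/(1-ε)⌋ + 1`. -/
def alphaTS (ε : ℝ) (arm : ℕ → Ω → Fin K) (X : Fin K → ℕ → Ω → ℝ) (a : Fin K) (t : ℕ)
    (ω : Ω) : ℕ :=
  ⌊rewSum arm X a t ω / (1 - ε)⌋₊ + 1

/-- The second Beta-posterior parameter of `ε`-TS: `β_a(t) = N_a(t) + 2 - α_a(t)`. -/
def betaTS (ε : ℝ) (arm : ℕ → Ω → Fin K) (X : Fin K → ℕ → Ω → ℝ) (a : Fin K) (t : ℕ)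
    (ω : Ω) : ℕ :=
  pulls arm a t ω + 2 - alphaTS ε arm X a t ω

/-- The posterior sample `θ_a(t)` used by `ε`-TS: if `μ̂_a(t) > 1 - ε` then `θ_a(t) = μ̂_a(t)`;
otherwise `θ_a(t) = (1-ε)·Y` where `Y ~ Beta(α_a(t), β_a(t))` is obtained by applying the
inverse Beta cdf to the fresh independent uniform random variable `U a t`. -/
def thetaTS (ε : ℝ) (arm : ℕ → Ω → Fin K) (X : Fin K → ℕ → Ω → ℝ)
    (U : Fin K → ℕ → Ω → ℝ) (a : Fin K) (t : ℕ) (ω : Ω) : ℝ :=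
  if 1 - ε < empMean arm X a t ω then empMean arm X a t ω
  else (1 - ε) * betaInvCDF (alphaTS ε arm X a t ω) (betaTS ε arm X a t ω) (U a t ω)

/-- An execution of the `ε`-TS algorithm on a `K`-armed Bernoulli bandit with mean vector `μ`:
`X a k` is the (i.i.d. `Bernoulli(μ a)`) reward of the `k`-th pull of arm `a`, `U a t` are
i.i.d. uniform random variables on `[0,1]` (independent of the rewards) providing the
posterior samples via the inverse-cdf construction, and at every round `t ≥ 1` the played arm
`arm t` maximizes the posterior samples `θ_·(t)`. -/
structure EpsTS (K : ℕ) (μ : Fin K → ℝ) (ε : ℝ) (Ω : Type*) [MeasurableSpace Ω] where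
  P : Measure Ω
  isProb : IsProbabilityMeasure P
  X : Fin K → ℕ → Ω → ℝ
  U : Fin K → ℕ → Ω → ℝ
  arm : ℕ → Ω → Fin K
  hXmeas : ∀ a n, Measurable (X a n)
  hUmeas : ∀ a t, Measurable (U a t)
  hArmMeas : ∀ t, Measurable (arm t)
  hXlaw : ∀ a n, P.map (X a n) = bernoulliLaw (μ a)
  hUlaw : ∀ a t, P.map (U a t) = uniform01
  hIndep : iIndepFun (m := fun _ : (Fin K × ℕ) ⊕ (Fin K × ℕ) => (inferInstance : MeasurableSpace ℝ))
    (Sum.elim (fun p : Fin K × ℕ => X p.1 p.2) (fun p : Fin K × ℕ => U p.1 p.2)) P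
  hArgmax : ∀ t, 1 ≤ t → ∀ ω b, thetaTS ε arm X U b t ω ≤ thetaTS ε arm X U (arm t ω) t ω

/-- `f` is an `ε`-gap function: `f : [0,1] → [0,∞)` with `f(Δ) = 0` for `Δ ∈ [0,ε]` and
`f(Δ) > 0` for `Δ > ε`. -/
def IsEpsGap (ε : ℝ) (f : ℝ → ℝ) : Prop :=
  (∀ Δ, 0 ≤ Δ → Δ ≤ 1 → 0 ≤ f Δ) ∧ (∀ Δ, 0 ≤ Δ → Δ ≤ ε → f Δ = 0) ∧
    ∀ Δ, ε < Δ → Δ ≤ 1 → 0 < f Δ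

/-- The lenient regret `R_f(T) = E[Σ_{t=1}^T f(Δ_{a_t})]` of an `ε`-TS execution, where
`Δ_a = μ* − μ_a` and `μ* = max_a μ_a`. -/
def lenientRegret {K : ℕ} {μ : Fin K → ℝ} {ε : ℝ} {Ω : Type*} [MeasurableSpace Ω]
    (E : EpsTS K μ ε Ω) (f : ℝ → ℝ) (T : ℕ) : ℝ :=
  ∫ ω, (∑ t ∈ Finset.Icc 1 T, f ((⨆ b, μ b) - μ (E.arm t ω))) ∂E.P

/-! On the event `θ₁(t) ≤ 1 - ε` the empirical mean of the optimal arm is at most `1 - ε`, so if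
`n = N₁(t) > (t - 1)^b` its first `n` rewards sum to at most `(1 - ε) n`. By the Chernoff bound
for i.i.d. `Bernoulli(μ₁)` rewards this has probability at most `exp (-n d(1 - ε, μ₁))`, and the
geometric tail over `n > (t - 1)^b ≥ 2 ln t / d + 1` is at most `1 / (t² d)`; summing over `t`
gives `π² / (6 d)`, while each round `t < L₁` contributes at most `1`. When `μ₁ = 1` the rewards
are almost surely `1` and every event is null. -/

open Finset

lemma klBern_pos {q p : ℝ} (hq0 : 0 < q) (hq1 : q < 1) (hp0 : 0 < p) (hp1 : p < 1)
    (hqp : q ≠ p) : 0 < klBern q p := by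
  have h1 : Real.log (p / q) < p / q - 1 :=
    Real.log_lt_sub_one_of_pos (by positivity) (by rwa [ne_eq, div_eq_one_iff_eq hq0.ne', eq_comm])
  have h2 : Real.log ((1 - p) / (1 - q)) ≤ (1 - p) / (1 - q) - 1 :=
    Real.log_le_sub_one_of_pos (div_pos (by linarith) (by linarith))
  have e1 : q * (p / q - 1) = p - q := by field_simp
  have e2 : (1 - q) * ((1 - p) / (1 - q) - 1) = q - p := by
    field_simp [(by linarith : 1 - q ≠ 0)]; ring
  have e3 : Real.log (q / p) = -Real.log (p / q) := by rw [← Real.log_inv, inv_div]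
  have e4 : Real.log ((1 - q) / (1 - p)) = -Real.log ((1 - p) / (1 - q)) := by
    rw [← Real.log_inv, inv_div]
  rw [klBern, e3, e4]
  nlinarith [mul_lt_mul_of_pos_left h1 hq0, mul_le_mul_of_nonneg_left h2 (by linarith : 0 ≤ 1 - q)]

lemma klBernE_eq_ofReal {p q : ℝ} (hq0 : 0 < q) (hq1 : q < 1) :
    klBernE p q = ENNReal.ofReal (klBern p q) :=
  if_neg (by rintro (⟨-, h⟩ | ⟨-, h⟩) <;> linarith)

lemma integrable_smul_dirac (c : ℝ≥0∞) (hc : c ≠ ∞) (x : ℝ) (f : ℝ → ℝ) :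
    Integrable f (c • Measure.dirac x) :=
  (integrable_dirac enorm_lt_top).smul_measure hc

lemma integrable_bernoulliLaw (p : ℝ) (f : ℝ → ℝ) : Integrable f (bernoulliLaw p) :=
  (integrable_smul_dirac _ ENNReal.ofReal_ne_top 1 f).add_measure
    (integrable_smul_dirac _ ENNReal.ofReal_ne_top 0 f)

lemma mgf_id_bernoulliLaw {p : ℝ} (hp0 : 0 ≤ p) (hp1 : p ≤ 1) (t : ℝ) :
    mgf id (bernoulliLaw p) t = p * exp t + (1 - p) := by
  rw [bernoulliLaw, mgf_add_measure (integrable_smul_dirac _ ENNReal.ofReal_ne_top _ _)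
    (integrable_smul_dirac _ ENNReal.ofReal_ne_top _ _), mgf_smul_measure, mgf_smul_measure,
    mgf_dirac', mgf_dirac', ENNReal.toReal_ofReal hp0, ENNReal.toReal_ofReal (by linarith)]
  simp

-- `t` is the optimal tilt, the minimiser of `t ↦ -t q + log 𝔼[exp (t Y)]` for `Y ~ Bernoulli(p)`.
lemma exp_neg_mul_mul_add_eq_exp_neg_klBern {q p : ℝ} (hq0 : 0 < q) (hq1 : q < 1) (hp0 : 0 < p)
    (hp1 : p < 1) :
    let t := Real.log (q * (1 - p) / (p * (1 - q)))
    exp (-t * q) * (p * exp t + (1 - p)) = exp (-klBern q p) := by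
  intro t
  have h1q : 0 < 1 - q := by linarith
  have h1p : 0 < 1 - p := by linarith
  have hmgf : p * exp t + (1 - p) = (1 - p) / (1 - q) := by
    rw [Real.exp_log (by positivity)]
    field_simp
    ring
  rw [hmgf, ← Real.exp_log (div_pos h1p h1q), ← Real.exp_add, klBern]
  congr 1
  simp only [t]
  rw [Real.log_div (by positivity) (by positivity), Real.log_mul hq0.ne' h1p.ne',
    Real.log_mul hp0.ne' h1q.ne', Real.log_div hq0.ne' hp0.ne', Real.log_div h1q.ne' h1p.ne',
    Real.log_div h1p.ne' h1q.ne']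
  ring

section Bernoulli

variable [MeasurableSpace Ω] {P : Measure Ω} {Y : Ω → ℝ} {p : ℝ}

lemma integrable_exp_mul_of_map_eq_bernoulliLaw (hY : Measurable Y)
    (hlaw : P.map Y = bernoulliLaw p) (t : ℝ) : Integrable (fun ω => exp (t * Y ω)) P := by
  have := integrable_bernoulliLaw p (fun x => exp (t * x))
  rwa [← hlaw, integrable_map_measure (by fun_prop) hY.aemeasurable] at this

lemma mgf_of_map_eq_bernoulliLaw (hY : Measurable Y) (hlaw : P.map Y = bernoulliLaw p)
    (hp0 : 0 ≤ p) (hp1 : p ≤ 1) (t : ℝ) : mgf Y P t = p * exp t + (1 - p) := by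
  rw [← mgf_id_map hY.aemeasurable, hlaw, mgf_id_bernoulliLaw hp0 hp1]

lemma ae_eq_one_of_map_eq_bernoulliLaw_one (hY : Measurable Y)
    (hlaw : P.map Y = bernoulliLaw 1) : ∀ᵐ ω ∂P, Y ω = 1 := by
  have hs : MeasurableSet ({1}ᶜ : Set ℝ) := (measurableSet_singleton 1).compl
  change P (Y ⁻¹' {1}ᶜ) = 0
  rw [← Measure.map_apply hY hs, hlaw, bernoulliLaw]
  simp [Measure.dirac_apply' _ hs]

end Bernoulli

section BernoulliSequence

variable [MeasurableSpace Ω] {P : Measure Ω} {Y : ℕ → Ω → ℝ}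

lemma measure_sum_le_le_exp_neg_klBern [IsProbabilityMeasure P] {p q : ℝ}
    (hY : ∀ k, Measurable (Y k)) (hlaw : ∀ k, P.map (Y k) = bernoulliLaw p)
    (hindep : iIndepFun Y P) (hq0 : 0 < q) (hqp : q < p) (hp1 : p < 1) (n : ℕ) :
    P {ω | ∑ k ∈ Icc 1 n, Y k ω ≤ q * n} ≤ ENNReal.ofReal (exp (-(n * klBern q p))) := by
  have hp0 : 0 < p := hq0.trans hqp
  have h1p : 0 < 1 - p := by linarith
  have h1q : 0 < 1 - q := by linarith
  set t := Real.log (q * (1 - p) / (p * (1 - q)))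
  have ht : t ≤ 0 := Real.log_nonpos (by positivity) <| by
    rw [div_le_one (mul_pos hp0 h1q)]; nlinarith
  have hchernoff := measure_le_le_exp_mul_mgf (X := ∑ k ∈ Icc 1 n, Y k) (q * n) ht
    (hindep.integrable_exp_mul_sum hY
      fun k _ => integrable_exp_mul_of_map_eq_bernoulliLaw (hY k) (hlaw k) t)
  rw [hindep.mgf_sum hY, prod_congr rfl fun k _ =>
    mgf_of_map_eq_bernoulliLaw (hY k) (hlaw k) hp0.le hp1.le t, prod_const, Nat.card_Icc,
    Nat.add_sub_cancel, show -t * (q * n) = n * (-t * q) by ring, Real.exp_nat_mul, ← mul_pow,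
    exp_neg_mul_mul_add_eq_exp_neg_klBern hq0 (hqp.trans hp1) hp0 hp1, ← Real.exp_nat_mul,
    mul_neg] at hchernoff
  rw [← ofReal_measureReal]
  refine ENNReal.ofReal_le_ofReal (le_of_eq_of_le ?_ hchernoff)
  simp only [Finset.sum_apply]

lemma measure_sum_le_eq_zero_of_bernoulliLaw_one (hY : ∀ k, Measurable (Y k))
    (hlaw : ∀ k, P.map (Y k) = bernoulliLaw 1) {q : ℝ} (hq1 : q < 1) {n : ℕ} (hn : 0 < n) :
    P {ω | ∑ k ∈ Icc 1 n, Y k ω ≤ q * n} = 0 := by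
  rw [measure_eq_zero_iff_ae_notMem]
  filter_upwards [ae_all_iff.2 fun k => ae_eq_one_of_map_eq_bernoulliLaw_one (hY k) (hlaw k)]
    with ω hω
  have hn' : (0 : ℝ) < n := by exact_mod_cast hn
  simp only [hω, sum_const, Nat.card_Icc, Nat.add_sub_cancel, nsmul_eq_mul, mul_one, not_le]
  nlinarith

end BernoulliSequence

lemma sum_Ioc_exp_neg_mul_le {d : ℝ} (hd : 0 < d) (m N : ℕ) :
    ∑ n ∈ Ioc m N, exp (-(n * d)) ≤ exp (-(m * d)) / d := by
  set r := exp (-d)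
  have hr1 : r < 1 := Real.exp_lt_one_iff.2 (by linarith)
  have hpow : ∀ n : ℕ, exp (-(n * d)) = r ^ n := fun n => by rw [← Real.exp_nat_mul]; ring_nf
  -- `d ≤ e^d - 1`, multiplied by `e^{-d}`
  have hdr : d * r ≤ 1 - r := by
    have := Real.add_one_le_exp d
    have hr : exp d * r = 1 := by rw [← Real.exp_add]; simp
    nlinarith [Real.exp_pos (-d)]
  simp only [hpow]
  calc ∑ n ∈ Ioc m N, r ^ n ≤ ∑ n ∈ Ico (m + 1) (N + 1), r ^ n :=
        sum_le_sum_of_subset_of_nonneg (fun n hn => by simp at hn ⊢; omega)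
          fun _ _ _ => by positivity
    _ ≤ r ^ (m + 1) / (1 - r) := geom_sum_Ico_le_of_lt_one (by positivity) hr1
    _ ≤ r ^ m / d := by
        rw [pow_succ, div_le_div_iff₀ (by linarith) hd, mul_assoc]
        exact mul_le_mul_of_nonneg_left (by linarith) (by positivity)

lemma sum_Ioc_floor_exp_neg_mul_le {d u : ℝ} (hd : 0 < d) {t : ℕ} (ht : 0 < t)
    (hu : 2 * Real.log t / d + 1 ≤ u) (N : ℕ) :
    ∑ n ∈ Ioc ⌊u⌋₊ N, exp (-(n * d)) ≤ 1 / (t : ℝ) ^ 2 / d := by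
  have ht' : (0 : ℝ) < t := by exact_mod_cast ht
  have hfloor : Real.log ((t : ℝ) ^ 2) ≤ ⌊u⌋₊ * d := by
    rw [Real.log_pow, ← div_le_iff₀ hd]
    push_cast
    linarith [Nat.sub_one_lt_floor u]
  refine (sum_Ioc_exp_neg_mul_le hd _ N).trans (div_le_div_of_nonneg_right ?_ hd.le)
  calc exp (-(⌊u⌋₊ * d)) ≤ exp (-Real.log ((t : ℝ) ^ 2)) := Real.exp_le_exp.2 (neg_le_neg hfloor)
    _ = 1 / (t : ℝ) ^ 2 := by rw [Real.exp_neg, Real.exp_log (by positivity), one_div]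

lemma sum_Icc_le_add_of_le_inv_sq {f : ℕ → ℝ≥0∞} {L : ℕ} {c : ℝ} (hc : 0 ≤ c)
    (hf : ∀ t, f t ≤ 1) (htail : ∀ t, 0 < t → L ≤ t → f t ≤ ENNReal.ofReal (1 / (t : ℝ) ^ 2 / c))
    (T : ℕ) : ∑ t ∈ Icc 1 T, f t ≤ L + ENNReal.ofReal (π ^ 2 / 6 / c) := by
  rw [← sum_filter_add_sum_filter_not (Icc 1 T) (· < L)]
  gcongr
  · calc ∑ t ∈ Icc 1 T with t < L, f t ≤ ∑ t ∈ Icc 1 T with t < L, 1 := sum_le_sum fun t _ => hf t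
      _ ≤ L := by
          rw [sum_const, nsmul_one, Nat.cast_le]
          exact (card_le_card fun t ht => by simp at ht ⊢; omega).trans_eq (card_range L)
  · calc ∑ t ∈ Icc 1 T with ¬t < L, f t
        ≤ ∑ t ∈ Icc 1 T with ¬t < L, ENNReal.ofReal (1 / (t : ℝ) ^ 2 / c) :=
          sum_le_sum fun t ht => by simp at ht; exact htail t (by omega) ht.2
      _ = ENNReal.ofReal (∑ t ∈ Icc 1 T with ¬t < L, 1 / (t : ℝ) ^ 2 / c) :=
          (ENNReal.ofReal_sum_of_nonneg fun _ _ => by positivity).symm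
      _ ≤ ENNReal.ofReal (π ^ 2 / 6 / c) := by
          rw [← sum_div]
          gcongr
          exact sum_le_hasSum _ (fun _ _ => by positivity) hasSum_zeta_two

section Bandit

variable {arm : ℕ → Ω → Fin K} {X : Fin K → ℕ → Ω → ℝ} {U : Fin K → ℕ → Ω → ℝ} {a : Fin K}
  {t : ℕ} {ε : ℝ}

lemma pulls_le_sub_one (ω : Ω) : pulls arm a t ω ≤ t - 1 := by
  simpa [pulls, sum_boole] using card_filter_le (Ico 1 t) (fun τ => arm τ ω = a)

lemma empMean_le_of_thetaTS_le {ω : Ω} (h : thetaTS ε arm X U a t ω ≤ 1 - ε) :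
    empMean arm X a t ω ≤ 1 - ε := by
  by_contra! hlt
  rw [thetaTS, if_pos hlt] at h
  exact h.not_gt hlt

lemma setOf_thetaTS_le_subset {u : ℝ} (hu : 0 ≤ u) :
    {ω | thetaTS ε arm X U a t ω ≤ 1 - ε ∧ u < pulls arm a t ω} ⊆
      ⋃ n ∈ Ioc ⌊u⌋₊ (t - 1), {ω | ∑ k ∈ Icc 1 n, X a k ω ≤ (1 - ε) * n} := by
  rintro ω ⟨hθ, hu_lt⟩
  have hfloor : ⌊u⌋₊ < pulls arm a t ω := (Nat.floor_lt hu).2 hu_lt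
  have hmean := empMean_le_of_thetaTS_le hθ
  have hpos : (0 : ℝ) < pulls arm a t ω := by exact_mod_cast hfloor.pos
  rw [empMean, if_neg hfloor.pos.ne', div_le_iff₀ hpos] at hmean
  exact Set.mem_biUnion (mem_Ioc.2 ⟨hfloor, pulls_le_sub_one ω⟩) hmean

end Bandit

namespace EpsTS

variable {μ : Fin K → ℝ} {ε : ℝ} [MeasurableSpace Ω] (E : EpsTS K μ ε Ω)

lemma iIndepFun_X (a : Fin K) : iIndepFun (E.X a) E.P :=
  E.hIndep.precomp (g := fun k => Sum.inl (a, k)) fun _ _ h => by simpa using h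

lemma measure_thetaTS_le_le_sum (a : Fin K) (t : ℕ) {u : ℝ} (hu : 0 ≤ u) :
    E.P {ω | thetaTS ε E.arm E.X E.U a t ω ≤ 1 - ε ∧ u < pulls E.arm a t ω} ≤
      ∑ n ∈ Ioc ⌊u⌋₊ (t - 1), E.P {ω | ∑ k ∈ Icc 1 n, E.X a k ω ≤ (1 - ε) * n} :=
  (measure_mono (setOf_thetaTS_le_subset hu)).trans (measure_biUnion_finset_le _ _)

lemma measure_thetaTS_le_le_inv_sq {a : Fin K} (hε : ε < 1) (hμa : 1 - ε < μ a) (hμa1 : μ a < 1)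
    {t : ℕ} (ht : 0 < t) {u : ℝ} (hu0 : 0 ≤ u)
    (hu : 2 * Real.log t / klBern (1 - ε) (μ a) + 1 ≤ u) :
    E.P {ω | thetaTS ε E.arm E.X E.U a t ω ≤ 1 - ε ∧ u < pulls E.arm a t ω} ≤
      ENNReal.ofReal (1 / (t : ℝ) ^ 2 / klBern (1 - ε) (μ a)) := by
  have := E.isProb
  have hq0 : 0 < 1 - ε := by linarith
  have hd := klBern_pos hq0 (hμa.trans hμa1) (hq0.trans hμa) hμa1 hμa.ne
  calc _ ≤ _ := E.measure_thetaTS_le_le_sum a t hu0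
    _ ≤ ∑ n ∈ Ioc ⌊u⌋₊ (t - 1), ENNReal.ofReal (exp (-(n * klBern (1 - ε) (μ a)))) :=
        sum_le_sum fun n _ => measure_sum_le_le_exp_neg_klBern (E.hXmeas a) (E.hXlaw a)
          (E.iIndepFun_X a) hq0 hμa hμa1 n
    _ = ENNReal.ofReal (∑ n ∈ Ioc ⌊u⌋₊ (t - 1), exp (-(n * klBern (1 - ε) (μ a)))) :=
        (ENNReal.ofReal_sum_of_nonneg fun _ _ => (Real.exp_pos _).le).symm
    _ ≤ _ := ENNReal.ofReal_le_ofReal (sum_Ioc_floor_exp_neg_mul_le hd ht hu _)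

lemma measure_thetaTS_le_eq_zero {a : Fin K} (hε : 0 < ε) (hμa : μ a = 1) (t : ℕ) {u : ℝ}
    (hu : 0 ≤ u) : E.P {ω | thetaTS ε E.arm E.X E.U a t ω ≤ 1 - ε ∧ u < pulls E.arm a t ω} = 0 :=
  nonpos_iff_eq_zero.1 <| (E.measure_thetaTS_le_le_sum a t hu).trans_eq <|
    sum_eq_zero fun n hn => measure_sum_le_eq_zero_of_bernoulliLaw_one (E.hXmeas a)
      (fun k => hμa ▸ E.hXlaw a k) (by linarith) (Nat.zero_lt_of_lt (mem_Ioc.1 hn).1)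

end EpsTS

theorem epsTS_sum_prob_theta_low_high_opt_general {K : ℕ} [NeZero K]
    (ε : ℝ) (hε : ε ∈ Set.Ioo (0 : ℝ) 1)
    (μ : Fin K → ℝ) (hμ : ∀ a, μ a ∈ Set.Icc (0 : ℝ) 1)
    (hopt : 1 - ε < μ 0)
    (b : ℝ)
    (L1 : ℕ) (hL1 : ∀ t : ℕ, L1 ≤ t →
      2 * Real.log t / klBern (1 - ε) (μ 0) + 1 ≤ ((t : ℝ) - 1) ^ b)
    {Ω : Type*} [MeasurableSpace Ω] (E : EpsTS K μ ε Ω) (T : ℕ) :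
    ∑ t ∈ Finset.Icc 1 T,
        E.P {ω | thetaTS ε E.arm E.X E.U 0 t ω ≤ 1 - ε ∧
          ((t : ℝ) - 1) ^ b < (pulls E.arm 0 t ω : ℝ)}
      ≤ (L1 : ℝ≥0∞) + ENNReal.ofReal (Real.pi ^ 2 / 6) / klBernE (1 - ε) (μ 0) := by
  have := E.isProb
  have hu : ∀ t : ℕ, 0 < t → 0 ≤ ((t : ℝ) - 1) ^ b := fun t ht =>
    Real.rpow_nonneg (sub_nonneg.2 (Nat.one_le_cast.2 ht)) b
  rcases (hμ 0).2.lt_or_eq with hμ1 | hμ1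
  · have hq0 : 0 < 1 - ε := by linarith [hε.2]
    have hd := klBern_pos hq0 (hopt.trans hμ1) (hq0.trans hopt) hμ1 hopt.ne
    rw [klBernE_eq_ofReal (hq0.trans hopt) hμ1, ← ENNReal.ofReal_div_of_pos hd]
    exact sum_Icc_le_add_of_le_inv_sq hd.le (fun _ => prob_le_one) (fun t ht htL =>
      E.measure_thetaTS_le_le_inv_sq hε.2 hopt hμ1 ht (hu t ht) (hL1 t htL)) T
  · rw [sum_eq_zero fun t ht => E.measure_thetaTS_le_eq_zero hε.1 hμ1 t (hu t (mem_Icc.1 ht).1)]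
    exact zero_le

/-- **Lemma (the optimal posterior sample is rarely small, case `μ_1 > 1 − ε`).** Assume
`μ_1 > 1 − ε` and let `b ∈ (0,1)`. If `L_1` is such that `(t−1)^b ≥ 2 ln t / d(1−ε, μ_1) + 1`
for all `t ≥ L_1`, then for every horizon `T`,
`Σ_{t=1}^T P(θ_1(t) ≤ 1−ε ∧ N_1(t) > (t−1)^b) ≤ L_1 + (π²/6)/d(1−ε, μ_1)`. -/
theorem epsTS_sum_prob_theta_low_high_opt {K : ℕ} [NeZero K] (hK : 2 ≤ K)
    (ε : ℝ) (hε : ε ∈ Set.Ioo (0 : ℝ) 1)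
    (μ : Fin K → ℝ) (hμ : ∀ a, μ a ∈ Set.Icc (0 : ℝ) 1)
    (hSorted : ∀ a b : Fin K, a ≤ b → μ b ≤ μ a)
    (hGap : ∀ a : Fin K, a ≠ 0 → ε < μ 0 - μ a)
    (hopt : 1 - ε < μ 0)
    (b : ℝ) (hb : b ∈ Set.Ioo (0 : ℝ) 1)
    (L1 : ℕ) (hL1 : ∀ t : ℕ, L1 ≤ t →
      2 * Real.log t / klBern (1 - ε) (μ 0) + 1 ≤ ((t : ℝ) - 1) ^ b)
    {Ω : Type*} [MeasurableSpace Ω] (E : EpsTS K μ ε Ω) (T : ℕ) :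
    ∑ t ∈ Finset.Icc 1 T,
        E.P {ω | thetaTS ε E.arm E.X E.U 0 t ω ≤ 1 - ε ∧
          ((t : ℝ) - 1) ^ b < (pulls E.arm 0 t ω : ℝ)}
      ≤ (L1 : ℝ≥0∞) + ENNReal.ofReal (Real.pi ^ 2 / 6) / klBernE (1 - ε) (μ 0) :=
  epsTS_sum_prob_theta_low_high_opt_general ε hε μ hμ hopt b L1 hL1 E T

end
end

section
/- For any ε ∈ [0, 1/2), any p ∈ [0, 1−2ε), and any q ∈ [p+ε, 1−ε), it holds that d(p/(1−ε), q/(1−ε)) ≥ (1/(4(1−ε))) · d(p, q+ε). -/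
/-!
Move the second arguments of both divergences along their segments with a common parameter
`u ∈ [0, 1]`: `t₁ = P + u (Q - P)` from `P = p/(1-ε)` to `Q = q/(1-ε)`, and `t₂ = p + u (q+ε-p)`
from `p` to `q + ε`. Since `∂ₜ d(p, t) = (t - p) / (t (1 - t))`, the difference of the two sides has
derivative `u (q-p)² / (s (c-s)) - u (q+ε-p)² / (4 c t₂ (1-t₂))` with `c = 1 - ε`, `s = c t₁` and
`t₂ = s + u ε`. It is nonnegative because `q + ε - p ≤ 2 (q - p)` and `s (c - s) ≤ c t₂ (1 - t₂)`,
so the difference, which vanishes at `u = 0`, is nonnegative at `u = 1`.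
-/

open MeasureTheory ProbabilityTheory Filter Real
open scoped ENNReal

noncomputable section

open Topology

lemma mul_log_div_eq_sub (a : ℝ) {b : ℝ} (hb : b ≠ 0) :
    a * log (a / b) = a * log a - a * log b := by
  rcases eq_or_ne a 0 with rfl | ha
  · simp
  · rw [log_div ha hb, mul_sub]

lemma klBern_self (p : ℝ) : klBern p p = 0 := by
  rcases eq_or_ne p 0 with rfl | h0
  · simp [klBern]
  rcases eq_or_ne p 1 with rfl | h1
  · simp [klBern]
  · simp [klBern, div_self h0, div_self (sub_ne_zero_of_ne h1.symm)]

lemma klBern_zero_left (t : ℝ) : klBern 0 t = -log (1 - t) := by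
  simp [klBern, log_inv]

lemma klBern_eq_sub (p : ℝ) {t : ℝ} (ht0 : t ≠ 0) (ht1 : t ≠ 1) :
    klBern p t = p * log p + (1 - p) * log (1 - p) - (p * log t + (1 - p) * log (1 - t)) := by
  rw [klBern, mul_log_div_eq_sub p ht0, mul_log_div_eq_sub (1 - p) (sub_ne_zero_of_ne ht1.symm)]
  ring

def klBernSlope (p t : ℝ) : ℝ := (t - p) / (t * (1 - t))

lemma hasDerivAt_klBern_right (p : ℝ) {t : ℝ} (ht0 : t ≠ 0) (ht1 : t ≠ 1) :
    HasDerivAt (klBern p) (klBernSlope p t) t := by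
  have h1t : 1 - t ≠ 0 := sub_ne_zero_of_ne ht1.symm
  have hev : (fun s => p * log p + (1 - p) * log (1 - p) - (p * log s + (1 - p) * log (1 - s)))
      =ᶠ[𝓝 t] klBern p := by
    filter_upwards [isOpen_ne.mem_nhds ht0, isOpen_ne.mem_nhds ht1] with s hs0 hs1
    exact (klBern_eq_sub p hs0 hs1).symm
  refine (((hasDerivAt_log ht0).const_mul p).add
    (((hasDerivAt_id t).const_sub 1).log h1t |>.const_mul (1 - p))).const_sub _
    |>.congr_of_eventuallyEq hev.symm |>.congr_deriv ?_
  rw [klBernSlope, id]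
  field_simp
  ring

lemma continuousOn_klBern_right {p : ℝ} (hp : 0 ≤ p) :
    ContinuousOn (klBern p) (Set.Ico p 1) := by
  intro t ⟨hpt, ht1⟩
  refine ContinuousAt.continuousWithinAt ?_
  rcases eq_or_ne t 0 with rfl | ht0
  · obtain rfl : p = 0 := le_antisymm hpt hp
    simp only [funext klBern_zero_left]
    exact ((continuous_const.sub continuous_id).continuousAt.log (by norm_num)).neg
  · exact (hasDerivAt_klBern_right p ht0 ht1.ne).continuousAt

lemma mul_sub_le_mul_mul_one_sub {ε δ s : ℝ} (hε : ε ≤ 1 / 2) (hδ0 : 0 ≤ δ) (hδε : δ ≤ ε)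
    (hs : 0 ≤ s) : s * (1 - ε - s) ≤ (1 - ε) * ((s + δ) * (1 - (s + δ))) := by
  rcases le_or_gt (1 - ε) (2 * s + δ) with h | h
  · nlinarith [mul_nonneg (hδ0.trans hδε) (sq_nonneg (s - (1 - ε))),
      mul_nonneg (mul_nonneg (by linarith : 0 ≤ 1 - ε) (sub_nonneg.2 hδε)) (sub_nonneg.2 h)]
  · nlinarith [mul_nonneg (mul_nonneg (by linarith : 0 ≤ 1 - ε) hδ0)
        (by linarith : 0 ≤ 1 - 2 * s - δ), mul_nonneg (hδ0.trans hδε) (sq_nonneg s)]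

lemma klBernSlope_comparison {ε p q u : ℝ} (hε0 : 0 ≤ ε) (hε : ε ≤ 1 / 2) (hp : 0 ≤ p)
    (hpq : p < q) (hpqε : p + ε ≤ q) (hq : q < 1 - ε) (hu0 : 0 < u) (hu1 : u ≤ 1) :
    1 / (4 * (1 - ε)) * ((q + ε - p) * klBernSlope p (p + u * (q + ε - p)))
      ≤ (q / (1 - ε) - p / (1 - ε)) *
        klBernSlope (p / (1 - ε)) (p / (1 - ε) + u * (q / (1 - ε) - p / (1 - ε))) := by
  set s := p + u * (q - p)
  have hts : p + u * (q + ε - p) = s + u * ε := by ring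
  have hs : 0 < s := by positivity
  have hsc : 0 < 1 - ε - s := by nlinarith
  have ht : 0 < s + u * ε := by positivity
  have ht1 : 0 < 1 - (s + u * ε) := by nlinarith
  have hc : 0 < 1 - ε := by linarith
  have hscaled : p / (1 - ε) + u * (q / (1 - ε) - p / (1 - ε)) = s / (1 - ε) := by ring
  have hrhs : (q / (1 - ε) - p / (1 - ε)) * klBernSlope (p / (1 - ε)) (s / (1 - ε))
      = u * (q - p) ^ 2 / (s * (1 - ε - s)) := by
    rw [klBernSlope]
    field_simp
    ring
  have hlhs : 1 / (4 * (1 - ε)) * ((q + ε - p) * klBernSlope p (s + u * ε))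
      = u * (q + ε - p) ^ 2 / (4 * (1 - ε) * ((s + u * ε) * (1 - (s + u * ε)))) := by
    rw [klBernSlope]
    field_simp
    ring
  rw [hts, hscaled, hrhs, hlhs, div_le_div_iff₀ (by positivity) (by positivity)]
  have hvar := mul_sub_le_mul_mul_one_sub hε (by positivity : 0 ≤ u * ε)
    (mul_le_of_le_one_left hε0 hu1) hs.le
  have hsq : (q + ε - p) ^ 2 ≤ 4 * (q - p) ^ 2 := by nlinarith
  calc u * (q + ε - p) ^ 2 * (s * (1 - ε - s))
      ≤ u * (q + ε - p) ^ 2 * ((1 - ε) * ((s + u * ε) * (1 - (s + u * ε)))) := by gcongr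
    _ ≤ u * (4 * (q - p) ^ 2) * ((1 - ε) * ((s + u * ε) * (1 - (s + u * ε)))) := by gcongr
    _ = u * (q - p) ^ 2 * (4 * (1 - ε) * ((s + u * ε) * (1 - (s + u * ε)))) := by ring

lemma continuousOn_klBern_along {p r : ℝ} (hp : 0 ≤ p) (hpr : p ≤ r) (hr : r < 1) :
    ContinuousOn (fun u => klBern p (p + u * (r - p))) (Set.Icc 0 1) := by
  refine (continuousOn_klBern_right hp).comp (by fun_prop) fun u ⟨hu0, hu1⟩ => ⟨?_, ?_⟩
  · nlinarith
  · nlinarith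

lemma hasDerivAt_klBern_along {p r u : ℝ} (hp : 0 ≤ p) (hpr : p < r) (hr : r < 1)
    (hu0 : 0 < u) (hu1 : u ≤ 1) :
    HasDerivAt (fun u => klBern p (p + u * (r - p)))
      ((r - p) * klBernSlope p (p + u * (r - p))) u := by
  have hpath : HasDerivAt (fun u => p + u * (r - p)) (r - p) u := by
    simpa using ((hasDerivAt_id u).mul_const (r - p)).const_add p
  rw [mul_comm]
  exact (hasDerivAt_klBern_right p (by nlinarith) (by nlinarith)).comp u hpath

theorem klBern_scaled_ge_general (ε p q : ℝ) (hε0 : 0 ≤ ε) (hε : ε < 1 / 2)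
    (hp0 : 0 ≤ p) (hq1 : p + ε ≤ q) (hq2 : q < 1 - ε) :
    (1 / (4 * (1 - ε))) * klBern p (q + ε) ≤ klBern (p / (1 - ε)) (q / (1 - ε)) := by
  obtain rfl | hpq := (show p ≤ q by linarith).eq_or_lt
  · obtain rfl : ε = 0 := by linarith
    simp [klBern_self]
  have hc : 0 < 1 - ε := by linarith
  have hpr : p < q + ε := by linarith
  have hr : q + ε < 1 := by linarith
  have hP : 0 ≤ p / (1 - ε) := by positivity
  have hPQ : p / (1 - ε) < q / (1 - ε) := by gcongr
  have hQ : q / (1 - ε) < 1 := (div_lt_one hc).2 hq2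
  set P := p / (1 - ε)
  set Q := q / (1 - ε)
  set r := q + ε
  set κ := 1 / (4 * (1 - ε))
  let F : ℝ → ℝ := fun u => klBern P (P + u * (Q - P)) - κ * klBern p (p + u * (r - p))
  have hF : MonotoneOn F (Set.Icc 0 1) := by
    refine monotoneOn_of_hasDerivWithinAt_nonneg (convex_Icc 0 1)
      (f' := fun u => (Q - P) * klBernSlope P (P + u * (Q - P))
        - κ * ((r - p) * klBernSlope p (p + u * (r - p))))
      ((continuousOn_klBern_along hP hPQ.le hQ).sub
        (continuousOn_const.mul (continuousOn_klBern_along hp0 hpr.le hr)))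
      (fun u hu => ?_) (fun u hu => ?_)
    all_goals rw [interior_Icc] at hu
    · exact ((hasDerivAt_klBern_along hP hPQ hQ hu.1 hu.2.le).sub
        ((hasDerivAt_klBern_along hp0 hpr hr hu.1 hu.2.le).const_mul κ)).hasDerivWithinAt
    · exact sub_nonneg.2 (klBernSlope_comparison hε0 hε.le hp0 hpq hq1 hq2 hu.1 hu.2.le)
  simpa [F, klBern_self] using hF (Set.left_mem_Icc.2 zero_le_one)
    (Set.right_mem_Icc.2 zero_le_one) zero_le_one

/-- **Lemma (mod-KL comparison).** For any `ε ∈ [0, 1/2)`, any `p ∈ [0, 1 − 2ε)` and any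
`q ∈ [p + ε, 1 − ε)`, one has `d(p/(1−ε), q/(1−ε)) ≥ d(p, q+ε) / (4(1−ε))`. -/
theorem klBern_scaled_ge (ε p q : ℝ) (hε0 : 0 ≤ ε) (hε : ε < 1 / 2)
    (hp0 : 0 ≤ p) (hp1 : p < 1 - 2 * ε) (hq1 : p + ε ≤ q) (hq2 : q < 1 - ε) :
    (1 / (4 * (1 - ε))) * klBern p (q + ε) ≤ klBern (p / (1 - ε)) (q / (1 - ε)) :=
  klBern_scaled_ge_general ε p q hε0 hε hp0 hq1 hq2
end
end

section
/- Let ε ∈ [0,1), 0 ≤ p ≤ q < 1−ε, and c ≥ 0. If x ∈ [p, q] satisfies d(x/(1−ε), q/(1−ε)) = (1/(1+c)) · d(p/(1−ε), q/(1−ε)), then x ≤ (c/(1+c)) · q + (1/(1+c)) · p. -/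
open MeasureTheory ProbabilityTheory Filter Real
open scoped ENNReal

noncomputable section

/-!
After rescaling by `1 - ε`, the map `t ↦ d(t, q)` is convex on `[0, 1]`, vanishes at `q` and is
positive at `p < q` (write `d` as the `klFun`-divergence). For `x = λ q + (1 - λ) p`, convexity
gives `d(x, q) ≤ (1 - λ) d(p, q)`, so the equation forces `1 / (1 + c) ≤ 1 - λ`, i.e.
`λ ≤ c / (1 + c)`.
-/

open InformationTheory Set

theorem ConvexOn.le_of_apply_eq_mul {s : Set ℝ} {f : ℝ → ℝ} {p q x θ : ℝ}
    (hf : ConvexOn ℝ s f) (hp : p ∈ s) (hq : q ∈ s) (hfq : f q = 0) (hfp : 0 < f p)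
    (hx : x ∈ Icc p q) (hfx : f x = θ * f p) :
    x ≤ θ * p + (1 - θ) * q := by
  obtain ⟨hpx, hxq⟩ := hx
  have hpq : p < q := (hpx.trans hxq).lt_of_ne (by rintro rfl; linarith)
  set l := (x - p) / (q - p) with hl
  have hl0 : 0 ≤ l := div_nonneg (by linarith) (by linarith)
  have hl1 : l ≤ 1 := (div_le_one (by linarith)).2 (by linarith)
  have hx_eq : l * q + (1 - l) * p = x := by
    rw [hl]; field_simp [sub_ne_zero.2 hpq.ne']; ring
  have hconv : f x ≤ (1 - l) * f p := by
    simpa [hx_eq, hfq] using hf.2 hq hp hl0 (sub_nonneg.2 hl1) (by ring)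
  have hθ : l ≤ 1 - θ := by linarith [le_of_mul_le_mul_right (hfx ▸ hconv) hfp]
  calc x = p + l * (q - p) := by rw [← hx_eq]; ring
    _ ≤ p + (1 - θ) * (q - p) := by gcongr
    _ = θ * p + (1 - θ) * q := by ring

/-- The Bernoulli KL divergence as the `f`-divergence with `f = klFun`. -/
theorem klBern_eq_klFun (a : ℝ) {b : ℝ} (hb0 : b ≠ 0) (hb1 : b ≠ 1) :
    klBern a b = b * klFun (a / b) + (1 - b) * klFun ((1 - a) / (1 - b)) := by
  have hb1' : 1 - b ≠ 0 := sub_ne_zero.2 hb1.symm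
  simp only [klBern, klFun]
  field_simp
  ring

theorem klBern_self_s13 {b : ℝ} (hb0 : b ≠ 0) (hb1 : b ≠ 1) : klBern b b = 0 := by
  rw [klBern_eq_klFun b hb0 hb1, div_self hb0, div_self (sub_ne_zero.2 hb1.symm), klFun_one]
  ring

theorem klBern_pos_s13 {a b : ℝ} (ha0 : 0 ≤ a) (ha1 : a ≤ 1) (hb0 : 0 < b) (hb1 : b < 1)
    (hab : a ≠ b) : 0 < klBern a b := by
  rw [klBern_eq_klFun a hb0.ne' hb1.ne]
  have hfirst : 0 < klFun (a / b) := by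
    refine (klFun_nonneg (by positivity)).lt_of_ne fun h ↦ hab ?_
    rwa [eq_comm, klFun_eq_zero_iff (by positivity), div_eq_one_iff_eq hb0.ne'] at h
  have hsecond : 0 ≤ klFun ((1 - a) / (1 - b)) :=
    klFun_nonneg (div_nonneg (by linarith) (by linarith))
  have := sub_pos.2 hb1
  positivity

theorem convexOn_klBern_left {b : ℝ} (hb0 : 0 < b) (hb1 : b < 1) :
    ConvexOn ℝ (Icc 0 1) (klBern · b) := by
  refine ⟨convex_Icc 0 1, fun x hx y hy α β hα hβ hαβ ↦ ?_⟩
  have hb1' : 0 < 1 - b := sub_pos.2 hb1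
  have h₁ := convexOn_klFun.2 (x := x / b) (y := y / b)
    (div_nonneg hx.1 hb0.le) (div_nonneg hy.1 hb0.le) hα hβ hαβ
  have h₂ := convexOn_klFun.2 (x := (1 - x) / (1 - b)) (y := (1 - y) / (1 - b))
    (div_nonneg (sub_nonneg.2 hx.2) hb1'.le) (div_nonneg (sub_nonneg.2 hy.2) hb1'.le) hα hβ hαβ
  simp only [smul_eq_mul] at h₁ h₂ ⊢
  rw [show α * (x / b) + β * (y / b) = (α * x + β * y) / b by ring] at h₁
  rw [show α * ((1 - x) / (1 - b)) + β * ((1 - y) / (1 - b)) =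
      (1 - (α * x + β * y)) / (1 - b) by field_simp; linear_combination hαβ] at h₂
  simp only [klBern_eq_klFun _ hb0.ne' hb1.ne]
  linarith [mul_le_mul_of_nonneg_left h₁ hb0.le, mul_le_mul_of_nonneg_left h₂ hb1'.le]

theorem klBern_equation_solution_le_general (ε p q c x : ℝ)
    (hp0 : 0 ≤ p) (hpq : p ≤ q) (hq : q < 1 - ε) (hc : 0 ≤ c)
    (hx : x ∈ Set.Icc p q)
    (heq : klBern (x / (1 - ε)) (q / (1 - ε)) =
      (1 / (1 + c)) * klBern (p / (1 - ε)) (q / (1 - ε))) :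
    x ≤ (c / (1 + c)) * q + (1 / (1 + c)) * p := by
  have hr : 0 < 1 - ε := by linarith
  have hc1 : 1 + c ≠ 0 := by positivity
  rcases hpq.eq_or_lt with rfl | hpq
  · obtain rfl : x = p := le_antisymm hx.2 hx.1
    field_simp
    linarith
  have hq0 : 0 < q / (1 - ε) := div_pos (hp0.trans_lt hpq) hr
  have hq1 : q / (1 - ε) < 1 := (div_lt_one hr).2 hq
  have hp1 : p / (1 - ε) < q / (1 - ε) := div_lt_div_of_pos_right hpq hr
  have hscaled := (convexOn_klBern_left hq0 hq1).le_of_apply_eq_mul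
    ⟨div_nonneg hp0 hr.le, by linarith⟩ ⟨hq0.le, hq1.le⟩ (klBern_self_s13 hq0.ne' hq1.ne)
    (klBern_pos_s13 (div_nonneg hp0 hr.le) (by linarith) hq0 hq1 hp1.ne)
    ⟨div_le_div_of_nonneg_right hx.1 hr.le, div_le_div_of_nonneg_right hx.2 hr.le⟩ heq
  rw [div_le_iff₀ hr] at hscaled
  calc x ≤ _ := hscaled
    _ = _ := by field_simp; ring

/-- **Lemma.** If `x ∈ [p, q]` solves `d(x/(1−ε), q/(1−ε)) = d(p/(1−ε), q/(1−ε))/(1+c)`,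
then `x ≤ (c/(1+c)) q + (1/(1+c)) p`. -/
theorem klBern_equation_solution_le (ε p q c x : ℝ) (hε0 : 0 ≤ ε) (hε1 : ε < 1)
    (hp0 : 0 ≤ p) (hpq : p ≤ q) (hq : q < 1 - ε) (hc : 0 ≤ c)
    (hx : x ∈ Set.Icc p q)
    (heq : klBern (x / (1 - ε)) (q / (1 - ε)) =
      (1 / (1 + c)) * klBern (p / (1 - ε)) (q / (1 - ε))) :
    x ≤ (c / (1 + c)) * q + (1 / (1 + c)) * p :=
  klBern_equation_solution_le_general ε p q c x hp0 hpq hq hc hx heq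
end
end

section
/- For all p ∈ [0,1] and q ∈ [0,1), it holds that d(p, q) ≥ (1−p) · ln(1/(1−q)) − ln 2. -/
open MeasureTheory ProbabilityTheory Filter Real
open scoped ENNReal

noncomputable section

/-- **Lemma.** For all `p ∈ [0,1]` and `q ∈ [0,1)`,
`d(p, q) ≥ (1 − p) · ln(1/(1−q)) − ln 2`. -/
theorem klBern_ge_log_sub_log_two (p q : ℝ) (hp0 : 0 ≤ p) (hp1 : p ≤ 1)
    (hq0 : 0 ≤ q) (hq1 : q < 1) :
    (1 - p) * Real.log (1 / (1 - q)) - Real.log 2 ≤ klBern p q := by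
  have hq1' : (0:ℝ) < 1 - q := by linarith
  -- entropy bound: p log p + (1-p) log (1-p) ≥ - log 2
  have hent : -Real.log 2 ≤ p * Real.log p + (1 - p) * Real.log (1 - p) := by
    have h := Real.binEntropy_le_log_two (p := p)
    unfold Real.binEntropy at h
    rw [Real.log_inv, Real.log_inv] at h
    linarith
  -- first term bound
  have h1 : p * Real.log p ≤ p * Real.log (p / q) := by
    rcases eq_or_lt_of_le hq0 with hq | hq
    · rw [← hq, div_zero, Real.log_zero, mul_zero]
      rcases eq_or_lt_of_le hp0 with hp | hp
      · rw [← hp]; simp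
      · have : Real.log p ≤ 0 := Real.log_nonpos hp0 hp1
        exact mul_nonpos_of_nonneg_of_nonpos hp0 this
    · rcases eq_or_lt_of_le hp0 with hp | hp
      · rw [← hp]; simp
      · rw [Real.log_div hp.ne' hq.ne']
        have : Real.log q < 0 := Real.log_neg hq (by linarith)
        nlinarith
  -- second term equality
  have h2 : (1 - p) * Real.log ((1 - p) / (1 - q)) =
      (1 - p) * Real.log (1 - p) + (1 - p) * Real.log (1 / (1 - q)) := by
    rcases eq_or_lt_of_le hp1 with hp | hp
    · rw [hp]; simp
    · have hp1' : (0:ℝ) < 1 - p := by linarith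
      rw [Real.log_div hp1'.ne' hq1'.ne', one_div, Real.log_inv]
      ring
  unfold klBern
  rw [h2]
  linarith

end
end
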